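/- Let g₁ = X⁴ + 6X²Y² + Y⁴ + 12X²Z² + 24XYZ² + 12Y²Z² + 8Z⁴ and g₂ = X⁴ + 2X²Y² + Y⁴ + 8X²YZ + 8XY²Z + 8X²Z² + 8XYZ² + 8Y²Z² + 8XZ³ + 8YZ³ + 4Z⁴ in ℤ[X,Y,Z]. Then g₁ ≠ g₂, and g₁(A₁, C₁, G₁) = g₂(A₁, C₁, G₁) in ℤ[[q]] (i.e., at level ℓ = 3), while for every odd integer d > 1 one has g₁(A_d, C_d, G_d) ≠ g₂(A_d, C_d, G_d) (i.e., the theta series differ at every level ℓ ≡ 3 mod 8 with ℓ > 3). -/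

import Mathlib

noncomputable section

/-- The positive definite quadratic form `Q_d(x,y) = x² + xy + d y²`. -/
def Qform (d : ℕ) (x y : ℤ) : ℤ := x ^ 2 + x * y + (d : ℤ) * y ^ 2

/-- The coset theta series `θ^{(2,d)}_{a,b}`. -/
def cosetTheta (d : ℕ) (a b : ℤ) : PowerSeries ℤ :=
  PowerSeries.mk fun k =>
    (Set.ncard {mn : ℤ × ℤ |
      Qform d (2 * mn.1 + a) (2 * mn.2 + b) = (k : ℤ)} : ℤ)

/-- `A_d = θ^{(2,d)}_{0,0}`. -/
def Az (d : ℕ) : PowerSeries ℤ := cosetTheta d 0 0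
/-- `C_d = θ^{(2,d)}_{1,0}`. -/
def Cz (d : ℕ) : PowerSeries ℤ := cosetTheta d 1 0
/-- `G_d = θ^{(2,d)}_{0,1}`. -/
def Gz (d : ℕ) : PowerSeries ℤ := cosetTheta d 0 1

open MvPolynomial in
/-- `g₁ = X⁴ + 6X²Y² + Y⁴ + 12X²Z² + 24XYZ² + 12Y²Z² + 8Z⁴`. -/
def g1 : MvPolynomial (Fin 3) ℤ :=
  X 0 ^ 4 + 6 * X 0 ^ 2 * X 1 ^ 2 + X 1 ^ 4 + 12 * X 0 ^ 2 * X 2 ^ 2 +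
    24 * X 0 * X 1 * X 2 ^ 2 + 12 * X 1 ^ 2 * X 2 ^ 2 + 8 * X 2 ^ 4

open MvPolynomial in
/-- `g₂ = X⁴ + 2X²Y² + Y⁴ + 8X²YZ + 8XY²Z + 8X²Z² + 8XYZ² + 8Y²Z² + 8XZ³ + 8YZ³ + 4Z⁴`. -/
def g2 : MvPolynomial (Fin 3) ℤ :=
  X 0 ^ 4 + 2 * X 0 ^ 2 * X 1 ^ 2 + X 1 ^ 4 + 8 * X 0 ^ 2 * X 1 * X 2 +
    8 * X 0 * X 1 ^ 2 * X 2 + 8 * X 0 ^ 2 * X 2 ^ 2 + 8 * X 0 * X 1 * X 2 ^ 2 +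
    8 * X 1 ^ 2 * X 2 ^ 2 + 8 * X 0 * X 2 ^ 3 + 8 * X 1 * X 2 ^ 3 + 4 * X 2 ^ 4

/-!
For `d = 1` the rotation `(x, y) ↦ (y, -x - y)` of the hexagonal lattice preserves `Q₁` and carries
the coset `(1, 0) + 2ℤ²` onto `(0, 1) + 2ℤ²`, so `C₁ = G₁`, and `g₁`, `g₂` agree on the plane
`Y = Z`. For `d ≥ 3`, the identity `4 Q_d(x, y) = (2x + y)² + (4d - 1) y²` gives
`A_d ≡ 1`, `C_d ≡ 2q` and `G_d ≡ 0` modulo `q³`, while `g₁(1, Y, 0) - g₂(1, Y, 0) = 4Y²`;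
hence the two series differ by `16q²` modulo `q³`.
-/

open PowerSeries

lemma four_mul_Qform (d : ℕ) (x y : ℤ) :
    4 * Qform d x y = (2 * x + y) ^ 2 + (4 * d - 1) * y ^ 2 := by
  unfold Qform; ring

lemma mul_sq_le_four_mul_Qform (d : ℕ) (x y : ℤ) : (4 * d - 1) * y ^ 2 ≤ 4 * Qform d x y := by
  rw [four_mul_Qform]; nlinarith [sq_nonneg (2 * x + y)]

lemma Qform_eq_zero {d : ℕ} (hd : 1 ≤ d) {x y : ℤ} (h : Qform d x y = 0) : x = 0 ∧ y = 0 := by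
  have hd' : (1 : ℤ) ≤ d := by exact_mod_cast hd
  have hy : y = 0 := by nlinarith [mul_sq_le_four_mul_Qform d x y, sq_nonneg y]
  subst hy
  exact ⟨pow_eq_zero_iff two_ne_zero |>.mp (by simpa [Qform] using h), rfl⟩

lemma coeff_cosetTheta (d : ℕ) (a b : ℤ) (k : ℕ) :
    coeff k (cosetTheta d a b) =
      {mn : ℤ × ℤ | Qform d (2 * mn.1 + a) (2 * mn.2 + b) = k}.ncard :=
  coeff_mk _ _

lemma coeff_cosetTheta_eq_zero {d : ℕ} {a b : ℤ} {k : ℕ}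
    (h : ∀ m n : ℤ, Qform d (2 * m + a) (2 * n + b) ≠ k) : coeff k (cosetTheta d a b) = 0 := by
  have hempty : {mn : ℤ × ℤ | Qform d (2 * mn.1 + a) (2 * mn.2 + b) = k} = ∅ :=
    Set.eq_empty_of_forall_notMem fun mn => h mn.1 mn.2
  rw [coeff_cosetTheta, hempty, Set.ncard_empty, Nat.cast_zero]

lemma cosetTheta_eq_of_equiv {d d' : ℕ} {a b a' b' : ℤ} (e : ℤ × ℤ ≃ ℤ × ℤ)
    (he : ∀ p : ℤ × ℤ, Qform d' (2 * (e p).1 + a') (2 * (e p).2 + b') =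
      Qform d (2 * p.1 + a) (2 * p.2 + b)) :
    cosetTheta d a b = cosetTheta d' a' b' := by
  ext k
  rw [coeff_cosetTheta, coeff_cosetTheta, eq_comm,
    ← Set.ncard_preimage_of_injective_subset_range e.injective (by simp)]
  simp only [Set.preimage_ofPred_eq, he]

lemma coeff_Az_eq_zero (d : ℕ) {k : ℕ} (hk : ¬ 4 ∣ k) : coeff k (Az d) = 0 :=
  coeff_cosetTheta_eq_zero fun m n h =>
    hk (Int.natCast_dvd_natCast.mp ⟨m ^ 2 + m * n + d * n ^ 2, by rw [← h]; unfold Qform; ring⟩)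

lemma coeff_Cz_eq_zero (d : ℕ) {k : ℕ} (hk : Even k) : coeff k (Cz d) = 0 := by
  refine coeff_cosetTheta_eq_zero fun m n h => ?_
  have hodd : Odd (k : ℤ) :=
    ⟨2 * m ^ 2 + 2 * m + 2 * m * n + n + 2 * d * n ^ 2, by rw [← h]; unfold Qform; ring⟩
  exact Int.not_even_iff_odd.mpr hodd (by exact_mod_cast hk)

lemma coeff_Gz_eq_zero {d k : ℕ} (hk : k < d) : coeff k (Gz d) = 0 := by
  refine coeff_cosetTheta_eq_zero fun m n h => ?_
  have hbound := mul_sq_le_four_mul_Qform d (2 * m + 0) (2 * n + 1)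
  have hy : 1 ≤ (2 * n + 1) ^ 2 := (one_le_sq_iff_one_le_abs _).mpr (Int.one_le_abs (by omega))
  have hk' : (k : ℤ) + 1 ≤ d := by exact_mod_cast hk
  rw [h] at hbound
  nlinarith

lemma coeff_zero_Az {d : ℕ} (hd : 1 ≤ d) : coeff 0 (Az d) = 1 := by
  have hset : {mn : ℤ × ℤ | Qform d (2 * mn.1 + 0) (2 * mn.2 + 0) = ((0 : ℕ) : ℤ)} = {(0, 0)} := by
    ext ⟨m, n⟩
    simp only [Set.mem_ofPred_eq, Set.mem_singleton_iff, Prod.mk.injEq]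
    refine ⟨fun h => ?_, by rintro ⟨rfl, rfl⟩; rfl⟩
    obtain ⟨hm, hn⟩ := Qform_eq_zero hd h
    omega
  rw [Az, coeff_cosetTheta, hset, Set.ncard_singleton, Nat.cast_one]

lemma coeff_one_Cz {d : ℕ} (hd : 1 ≤ d) : coeff 1 (Cz d) = 2 := by
  have hset : {mn : ℤ × ℤ | Qform d (2 * mn.1 + 1) (2 * mn.2 + 0) = ((1 : ℕ) : ℤ)} =
      {(0, 0), (-1, 0)} := by
    ext ⟨m, n⟩
    simp only [Set.mem_ofPred_eq, Set.mem_insert_iff, Set.mem_singleton_iff, Prod.mk.injEq]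
    refine ⟨fun h => ?_, by rintro (⟨rfl, rfl⟩ | ⟨rfl, rfl⟩) <;> rfl⟩
    have hd' : (1 : ℤ) ≤ d := by exact_mod_cast hd
    have hn : n = 0 := by
      have hbound := mul_sq_le_four_mul_Qform d (2 * m + 1) (2 * n + 0)
      rw [h, add_zero, mul_pow, Nat.cast_one] at hbound
      have hn1 : n ^ 2 < 1 := by nlinarith [mul_nonneg (sub_nonneg.mpr hd') (sq_nonneg n)]
      exact Int.abs_lt_one_iff.mp ((sq_lt_one_iff_abs_lt_one n).mp hn1)
    subst hn
    have hm : (2 * m + 1) ^ 2 = 1 ^ 2 := by simpa [Qform] using h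
    rcases sq_eq_sq_iff_eq_or_eq_neg.mp hm with hm | hm <;> omega
  rw [Cz, coeff_cosetTheta, hset, Set.ncard_pair (by simp), Nat.cast_ofNat]

lemma X_pow_three_dvd_Az_sub_one {d : ℕ} (hd : 1 ≤ d) : (X : ℤ⟦X⟧) ^ 3 ∣ Az d - 1 := by
  refine X_pow_dvd_iff.mpr fun k hk => ?_
  interval_cases k
  · rw [map_sub, coeff_zero_Az hd, coeff_one, if_pos rfl, sub_self]
  · rw [map_sub, coeff_Az_eq_zero d (by norm_num), coeff_one, if_neg one_ne_zero, sub_self]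
  · rw [map_sub, coeff_Az_eq_zero d (by norm_num), coeff_one, if_neg two_ne_zero, sub_self]

lemma X_pow_three_dvd_Cz_sub {d : ℕ} (hd : 1 ≤ d) : (X : ℤ⟦X⟧) ^ 3 ∣ Cz d - 2 * X := by
  refine X_pow_dvd_iff.mpr fun k hk => ?_
  interval_cases k
  · rw [map_sub, coeff_Cz_eq_zero d Even.zero, coeff_zero_mul_X, sub_self]
  · rw [map_sub, coeff_one_Cz hd, coeff_succ_mul_X, coeff_zero_eq_constantCoeff_apply, map_ofNat,
      sub_self]
  · rw [map_sub, coeff_Cz_eq_zero d even_two, coeff_succ_mul_X, ← map_ofNat C, coeff_C,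
      if_neg one_ne_zero, sub_self]

lemma X_pow_dvd_Gz (d : ℕ) : (X : ℤ⟦X⟧) ^ d ∣ Gz d :=
  X_pow_dvd_iff.mpr fun _ hk => coeff_Gz_eq_zero hk

lemma Cz_one_eq_Gz_one : Cz 1 = Gz 1 :=
  cosetTheta_eq_of_equiv
    { toFun := fun p => (p.2, -p.1 - p.2 - 1)
      invFun := fun p => (-p.1 - p.2 - 1, p.1)
      left_inv := fun p => by ext <;> simp; ring
      right_inv := fun p => by ext <;> simp; ring }
    fun p => by simp only [Equiv.coe_fn_mk, Qform]; push_cast; ring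

section Evaluation

variable {R : Type*} [CommRing R] [Algebra ℤ R]

open MvPolynomial

lemma aeval_g1_eq_aeval_g2_of_eq (x y : R) : aeval ![x, y, y] g1 = aeval ![x, y, y] g2 := by
  simp only [g1, g2, map_add, map_mul, map_pow, aeval_X, aeval_ofNat, Matrix.cons_val_zero,
    Matrix.cons_val_one, Matrix.cons_val]
  ring

lemma aeval_g1_eq_aeval_g2_add (y : R) :
    aeval ![1, y, 0] g1 = aeval ![1, y, 0] g2 + 4 * y ^ 2 := by
  simp only [g1, g2, map_add, map_mul, map_pow, aeval_X, aeval_ofNat, Matrix.cons_val_zero,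
    Matrix.cons_val_one, Matrix.cons_val]
  ring

end Evaluation

lemma g1_ne_g2 : g1 ≠ g2 := by
  intro h
  have h' := congrArg (MvPolynomial.eval ![(1 : ℤ), 1, 0]) h
  simp [g1, g2] at h'

lemma aeval_g1_ne_aeval_g2_of_three_le {d : ℕ} (hd : 3 ≤ d) :
    MvPolynomial.aeval ![Az d, Cz d, Gz d] g1 ≠ MvPolynomial.aeval ![Az d, Cz d, Gz d] g2 := by
  let π := Ideal.Quotient.mkₐ ℤ (Ideal.span {(X : ℤ⟦X⟧) ^ 3})
  have hπ : ∀ f g : ℤ⟦X⟧, π f = π g ↔ X ^ 3 ∣ f - g := fun f g => by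
    rw [Ideal.Quotient.mkₐ_eq_mk, Ideal.Quotient.eq, Ideal.mem_span_singleton]
  have hvals : (fun i => π (![Az d, Cz d, Gz d] i)) = ![1, π (2 * X), 0] := by
    funext i
    fin_cases i
    · simpa using (hπ _ 1).mpr (X_pow_three_dvd_Az_sub_one (by omega))
    · exact (hπ _ _).mpr (X_pow_three_dvd_Cz_sub (by omega))
    · simpa using (hπ _ 0).mpr (by simpa using (pow_dvd_pow X hd).trans (X_pow_dvd_Gz d))
  intro h
  have h' := congrArg π h
  rw [MvPolynomial.comp_aeval_apply, MvPolynomial.comp_aeval_apply, hvals,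
    aeval_g1_eq_aeval_g2_add, add_eq_left] at h'
  have hdvd : X ^ 3 ∣ (16 * X ^ 2 : ℤ⟦X⟧) := by
    rw [← sub_zero (16 * X ^ 2), ← hπ, map_zero, ← h']
    simp only [map_mul, map_pow, map_ofNat]
    ring
  have hcoeff := X_pow_dvd_iff.mp hdvd 2 (by norm_num)
  rw [← map_ofNat C 16, coeff_C_mul_X_pow, if_pos rfl] at hcoeff
  norm_num at hcoeff

theorem stmt13 :
    g1 ≠ g2 ∧
    MvPolynomial.aeval ![Az 1, Cz 1, Gz 1] g1 =
      MvPolynomial.aeval ![Az 1, Cz 1, Gz 1] g2 ∧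
    (∀ d : ℕ, 1 < d → Odd d →
      MvPolynomial.aeval ![Az d, Cz d, Gz d] g1 ≠
        MvPolynomial.aeval ![Az d, Cz d, Gz d] g2) := by
  refine ⟨g1_ne_g2, ?_, fun d hd hodd => aeval_g1_ne_aeval_g2_of_three_le ?_⟩
  · rw [← Cz_one_eq_Gz_one]
    exact aeval_g1_eq_aeval_g2_of_eq _ _
  · obtain ⟨j, rfl⟩ := hodd
    omega
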